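/- If V ⊆ ℝⁿ is a convex domain, φ : ℝ × V → ℝ is convex, V is bounded, and for each t ∈ ℝ the integral ∫_V e^{-φ(t,x)} dλ(x) is finite, then the function Φ defined by e^{-Φ(t)} = ∫_V e^{-φ(t,x)} dλ(x) is convex on ℝ. -/

import Mathlib

/-!
The key input is the Prékopa–Leindler inequality: if `f x ^ (1 - t) * g y ^ t ≤ h ((1 - t) x + t y)`
for all `x, y`, then `(∫ f) ^ (1 - t) * (∫ g) ^ t ≤ ∫ h`. On `ℝ`, after rescaling `f` and `g` to
have supremum `1`, the superlevel sets satisfy `(1 - t) {f > s} + t {g > s} ⊆ {h > s}`, so the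
one-dimensional Brunn–Minkowski inequality `|A| + |B| ≤ |A + B|` and the layer-cake formula give
`(1 - t) ∫ f + t ∫ g ≤ ∫ h`, which dominates the geometric mean. The inequality passes to products
by Fubini, hence to `ℝⁿ`. Applied to the slices of the log-concave function `e^{-φ}` on `ℝ × V`
(extended by zero), it says that `t ↦ ∫_V e^{-φ(t,x)} dx` is log-concave, i.e. `Φ` is convex.
-/

open MeasureTheory Set
open scoped Pointwise ENNReal NNReal

theorem ENNReal.rpow_mul_rpow_le_add {a b : ℝ≥0∞} {s t : ℝ} (hs : 0 < s) (ht : 0 < t)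
    (hst : s + t = 1) : a ^ s * b ^ t ≤ ENNReal.ofReal s * a + ENNReal.ofReal t * b := by
  rcases eq_or_ne a ⊤ with rfl | ha
  · simp [ENNReal.mul_top (ENNReal.ofReal_pos.mpr hs).ne']
  rcases eq_or_ne b ⊤ with rfl | hb
  · simp [ENNReal.mul_top (ENNReal.ofReal_pos.mpr ht).ne']
  lift a to ℝ≥0 using ha
  lift b to ℝ≥0 using hb
  have := NNReal.geom_mean_le_arith_mean2_weighted (Real.toNNReal s) (Real.toNNReal t) a b
    (by rw [← Real.toNNReal_add hs.le ht.le, hst, Real.toNNReal_one])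
  rw [Real.coe_toNNReal _ hs.le, Real.coe_toNNReal _ ht.le] at this
  rw [← ENNReal.coe_rpow_of_nonneg _ hs.le, ← ENNReal.coe_rpow_of_nonneg _ ht.le]
  exact (ENNReal.coe_le_coe.mpr this).trans_eq (by simp [ENNReal.ofReal])

theorem ENNReal.iSup_rpow_mul_iSup_rpow_le {ι : Type*} [SemilatticeSup ι] {u v : ι → ℝ≥0∞}
    (hu : Monotone u) (hv : Monotone v) {p q : ℝ} (hp : 0 < p) (hq : 0 < q) {c : ℝ≥0∞}
    (huv : ∀ i, u i ^ p * v i ^ q ≤ c) : (⨆ i, u i) ^ p * (⨆ i, v i) ^ q ≤ c := by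
  have hrpow : ∀ {r : ℝ}, 0 < r → ∀ w : ι → ℝ≥0∞, (⨆ i, w i) ^ r = ⨆ i, w i ^ r :=
    fun hr _ ↦ Monotone.map_iSup_of_continuousAt ENNReal.continuous_rpow_const.continuousAt
      (ENNReal.monotone_rpow_of_nonneg hr.le) (ENNReal.zero_rpow_of_pos hr)
  rw [hrpow hp, hrpow hq, ENNReal.iSup_mul]
  refine iSup_le fun i ↦ ?_
  rw [ENNReal.mul_iSup]
  exact iSup_le fun j ↦ (mul_le_mul' (ENNReal.rpow_le_rpow (hu le_sup_left) hp.le)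
    (ENNReal.rpow_le_rpow (hv le_sup_right) hq.le)).trans (huv (i ⊔ j))

theorem smul_setOf_lt_add_smul_setOf_lt_subset {E : Type*} [AddCommGroup E] [Module ℝ E]
    {t : ℝ} (ht₀ : 0 < t) (ht₁ : t < 1) {f g h : E → ℝ≥0∞}
    (hfgh : ∀ x y, f x ^ (1 - t) * g y ^ t ≤ h ((1 - t) • x + t • y))
    {c : ℝ≥0∞} (hc₀ : c ≠ 0) (hc : c ≠ ⊤) :
    (1 - t) • {x | c < f x} + t • {y | c < g y} ⊆ {z | c < h z} := by
  rintro _ ⟨_, ⟨x, hx, rfl⟩, _, ⟨y, hy, rfl⟩, rfl⟩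
  calc c = c ^ (1 - t) * c ^ t := by rw [← ENNReal.rpow_add _ _ hc₀ hc, sub_add_cancel,
        ENNReal.rpow_one]
    _ < f x ^ (1 - t) * g y ^ t :=
        ENNReal.mul_lt_mul (ENNReal.rpow_lt_rpow hx (by linarith)) (ENNReal.rpow_lt_rpow hy ht₀)
    _ ≤ h ((1 - t) • x + t • y) := hfgh x y

namespace Real

theorem volume_setOf_ofReal_lt_inter_Ioi (a : ℝ≥0∞) :
    volume ({s : ℝ | ENNReal.ofReal s < a} ∩ Ioi 0) = a := by
  rcases eq_or_ne a ⊤ with rfl | ha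
  · simp
  have : {s : ℝ | ENNReal.ofReal s < a} ∩ Ioi 0 = Ioo 0 a.toReal := by
    ext s
    simp only [mem_inter_iff, mem_ofPred_eq, mem_Ioi, mem_Ioo]
    exact ⟨fun h ↦ ⟨h.2, (ENNReal.ofReal_lt_iff_lt_toReal h.2.le ha).mp h.1⟩,
      fun h ↦ ⟨(ENNReal.ofReal_lt_iff_lt_toReal h.1.le ha).mpr h.2, h.1⟩⟩
  rw [this, volume_Ioo, sub_zero, ENNReal.ofReal_toReal ha]

theorem volume_add_volume_le_volume_add_of_isCompact {K L : Set ℝ} (hK : IsCompact K)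
    (hL : IsCompact L) (hK₀ : K.Nonempty) (hL₀ : L.Nonempty) :
    volume K + volume L ≤ volume (K + L) := by
  set a := sSup K
  set b := sInf L
  -- `K + b` and `a + L` both lie in `K + L` and meet only at `a + b`.
  have hsub : (b +ᵥ K) ∪ (a +ᵥ L) ⊆ K + L := by
    rintro _ (⟨k, hk, rfl⟩ | ⟨l, hl, rfl⟩)
    · exact ⟨k, hk, b, hL.sInf_mem hL₀, add_comm k b⟩
    · exact ⟨a, hK.sSup_mem hK₀, l, hl, rfl⟩
  have hinter : (b +ᵥ K) ∩ (a +ᵥ L) ⊆ {a + b} := by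
    rintro _ ⟨⟨k, hk, rfl⟩, ⟨l, hl, hkl⟩⟩
    have : k ≤ a := le_csSup hK.bddAbove hk
    have : b ≤ l := csInf_le hL.bddBelow hl
    simp only [vadd_eq_add, mem_singleton_iff] at hkl ⊢
    linarith
  calc volume K + volume L = volume (b +ᵥ K) + volume (a +ᵥ L) := by
        rw [measure_vadd, measure_vadd]
    _ = volume ((b +ᵥ K) ∪ (a +ᵥ L)) + volume ((b +ᵥ K) ∩ (a +ᵥ L)) :=
        (measure_union_add_inter _ (hL.vadd a).isClosed.measurableSet).symm
    _ ≤ volume (K + L) + volume ({a + b} : Set ℝ) :=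
        add_le_add (measure_mono hsub) (measure_mono hinter)
    _ = volume (K + L) := by simp

theorem volume_add_volume_le_volume_add {A B : Set ℝ} (hA : MeasurableSet A)
    (hB : MeasurableSet B) (hA₀ : A.Nonempty) (hB₀ : B.Nonempty) :
    volume A + volume B ≤ volume (A + B) := by
  obtain ⟨a, ha⟩ := hA₀
  obtain ⟨b, hb⟩ := hB₀
  rw [hA.measure_eq_iSup_isCompact, hB.measure_eq_iSup_isCompact]
  simp_rw [iSup_and']
  rw [ENNReal.biSup_add' ⟨{a}, singleton_subset_iff.mpr ha, isCompact_singleton⟩]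
  refine iSup₂_le fun K ⟨hKA, hK⟩ ↦ ?_
  rw [ENNReal.add_biSup' ⟨{b}, singleton_subset_iff.mpr hb, isCompact_singleton⟩]
  refine iSup₂_le fun L ⟨hLB, hL⟩ ↦ ?_
  calc volume K + volume L ≤ volume (insert a K) + volume (insert b L) :=
        add_le_add (measure_mono (subset_insert a K)) (measure_mono (subset_insert b L))
    _ ≤ volume (insert a K + insert b L) :=
        volume_add_volume_le_volume_add_of_isCompact (hK.insert a) (hL.insert b)
          (insert_nonempty a K) (insert_nonempty b L)
    _ ≤ volume (A + B) :=
        measure_mono (add_subset_add (insert_subset ha hKA) (insert_subset hb hLB))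

theorem ofReal_mul_volume_add_le_volume_smul_add {A B : Set ℝ} (hA : MeasurableSet A)
    (hB : MeasurableSet B) (hA₀ : A.Nonempty) (hB₀ : B.Nonempty) {t : ℝ} (ht₀ : 0 < t)
    (ht₁ : t < 1) :
    ENNReal.ofReal (1 - t) * volume A + ENNReal.ofReal t * volume B ≤
      volume ((1 - t) • A + t • B) := by
  have ht₁' : 0 < 1 - t := by linarith
  have := volume_add_volume_le_volume_add (hA.const_smul_of_ne_zero ht₁'.ne')
    (hB.const_smul_of_ne_zero ht₀.ne') (hA₀.smul_set) (hB₀.smul_set)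
  rwa [Measure.addHaar_smul, Measure.addHaar_smul, Module.finrank_self, pow_one, pow_one,
    abs_of_pos ht₁', abs_of_pos ht₀] at this

end Real

namespace MeasureTheory

theorem lintegral_eq_lintegral_meas_ofReal_lt {α : Type*} [MeasurableSpace α] (μ : Measure α)
    [SFinite μ] {f : α → ℝ≥0∞} (hf : Measurable f) :
    ∫⁻ x, f x ∂μ = ∫⁻ s in Ioi 0, μ {x | ENNReal.ofReal s < f x} := by
  have hS : MeasurableSet {p : α × ℝ | ENNReal.ofReal p.2 < f p.1} :=
    measurableSet_lt (by fun_prop) (hf.comp measurable_fst)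
  calc ∫⁻ x, f x ∂μ = ∫⁻ x, volume.restrict (Ioi 0) {s | ENNReal.ofReal s < f x} ∂μ := by
        simp_rw [Measure.restrict_apply' measurableSet_Ioi, Real.volume_setOf_ofReal_lt_inter_Ioi]
    _ = (μ.prod (volume.restrict (Ioi 0))) {p | ENNReal.ofReal p.2 < f p.1} :=
        (Measure.prod_apply hS).symm
    _ = ∫⁻ s in Ioi 0, μ {x | ENNReal.ofReal s < f x} := Measure.prod_apply_symm hS

theorem lintegral_eq_setLIntegral_Ioo_meas_ofReal_lt {α : Type*} [MeasurableSpace α]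
    (μ : Measure α) [SFinite μ] {f : α → ℝ≥0∞} (hf : Measurable f) (hf₁ : ∀ x, f x ≤ 1) :
    ∫⁻ x, f x ∂μ = ∫⁻ s in Ioo 0 1, μ {x | ENNReal.ofReal s < f x} := by
  have hempty : ∀ s ∈ Ici (1 : ℝ), μ {x | ENNReal.ofReal s < f x} = 0 := fun s hs ↦ by
    rw [← measure_empty (μ := μ)]
    exact congrArg μ (eq_empty_of_forall_notMem fun x hx ↦
      (hx.trans_le (hf₁ x)).not_ge (ENNReal.one_le_ofReal.mpr hs))
  rw [lintegral_eq_lintegral_meas_ofReal_lt μ hf, ← Ioo_union_Ici_eq_Ioi zero_lt_one,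
    lintegral_union measurableSet_Ici ((Iio_disjoint_Ici le_rfl).mono_left Ioo_subset_Iio_self),
    setLIntegral_congr_fun measurableSet_Ici hempty, lintegral_zero, add_zero]

theorem monotone_lintegral_min_natCast {α : Type*} [MeasurableSpace α] (μ : Measure α)
    (f : α → ℝ≥0∞) : Monotone fun n : ℕ ↦ ∫⁻ x, min (f x) n ∂μ :=
  fun _ _ hmn ↦ lintegral_mono fun _ ↦ min_le_min_left _ (Nat.cast_le.mpr hmn)

theorem iSup_lintegral_min_natCast {α : Type*} [MeasurableSpace α] (μ : Measure α)
    {f : α → ℝ≥0∞} (hf : Measurable f) : ⨆ n : ℕ, ∫⁻ x, min (f x) n ∂μ = ∫⁻ x, f x ∂μ := by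
  rw [← lintegral_iSup (fun _ ↦ hf.min measurable_const)
    (fun _ _ hmn _ ↦ min_le_min_left _ (Nat.cast_le.mpr hmn))]
  simp_rw [← inf_iSup_eq, ENNReal.iSup_natCast, min_top_right]

def PrekopaLeindler {E : Type*} [AddCommGroup E] [Module ℝ E] [MeasurableSpace E]
    (μ : Measure E) : Prop :=
  ∀ ⦃t : ℝ⦄, 0 < t → t < 1 → ∀ ⦃f g h : E → ℝ≥0∞⦄, Measurable f → Measurable g → Measurable h →
    (∀ x y, f x ^ (1 - t) * g y ^ t ≤ h ((1 - t) • x + t • y)) →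
    (∫⁻ x, f x ∂μ) ^ (1 - t) * (∫⁻ y, g y ∂μ) ^ t ≤ ∫⁻ z, h z ∂μ

namespace PrekopaLeindler

variable {E F : Type*} [AddCommGroup E] [Module ℝ E] [MeasurableSpace E]
  [AddCommGroup F] [Module ℝ F] [MeasurableSpace F] {μ : Measure E} {ν : Measure F}

theorem dirac_zero : PrekopaLeindler (Measure.dirac (0 : E)) := by
  intro t _ _ f g h hf hg hh hfgh
  simpa [lintegral_dirac' _ hf, lintegral_dirac' _ hg, lintegral_dirac' _ hh] using hfgh 0 0

theorem of_measurePreserving (hν : PrekopaLeindler ν) (e : F →ₗ[ℝ] E)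
    (he : MeasurePreserving e ν μ) (he' : MeasurableEmbedding e) : PrekopaLeindler μ := by
  intro t ht₀ ht₁ f g h hf hg hh hfgh
  simp only [← he.lintegral_comp_emb he']
  exact hν ht₀ ht₁ (hf.comp he'.measurable) (hg.comp he'.measurable) (hh.comp he'.measurable)
    fun x y ↦ by simpa using hfgh (e x) (e y)

theorem prod [SFinite ν] (hμ : PrekopaLeindler μ) (hν : PrekopaLeindler ν) :
    PrekopaLeindler (μ.prod ν) := by
  intro t ht₀ ht₁ f g h hf hg hh hfgh
  rw [lintegral_prod _ hf.aemeasurable, lintegral_prod _ hg.aemeasurable,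
    lintegral_prod _ hh.aemeasurable]
  exact hμ ht₀ ht₁ hf.lintegral_prod_right' hg.lintegral_prod_right' hh.lintegral_prod_right'
    fun x y ↦ hν ht₀ ht₁ (hf.comp measurable_prodMk_left) (hg.comp measurable_prodMk_left)
      (hh.comp measurable_prodMk_left) fun u v ↦ hfgh (x, u) (y, v)

end PrekopaLeindler

end MeasureTheory

namespace Real

theorem ofReal_mul_lintegral_add_le_of_iSup_eq_one {t : ℝ} (ht₀ : 0 < t) (ht₁ : t < 1)
    {f g h : ℝ → ℝ≥0∞} (hf : Measurable f) (hg : Measurable g) (hh : Measurable h)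
    (hf₁ : ⨆ x, f x = 1) (hg₁ : ⨆ y, g y = 1)
    (hfgh : ∀ x y, f x ^ (1 - t) * g y ^ t ≤ h ((1 - t) • x + t • y)) :
    ENNReal.ofReal (1 - t) * (∫⁻ x, f x) + ENNReal.ofReal t * (∫⁻ y, g y) ≤ ∫⁻ z, h z := by
  have hlevel : ∀ s ∈ Ioo (0 : ℝ) 1,
      ENNReal.ofReal (1 - t) * volume {x | ENNReal.ofReal s < f x} +
        ENNReal.ofReal t * volume {y | ENNReal.ofReal s < g y} ≤
      volume {z | ENNReal.ofReal s < h z} := fun s ⟨hs₀, hs₁⟩ ↦ by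
    have hs : ENNReal.ofReal s < 1 := ENNReal.ofReal_lt_one.mpr hs₁
    refine (ofReal_mul_volume_add_le_volume_smul_add (measurableSet_lt measurable_const hf)
      (measurableSet_lt measurable_const hg) ?_ ?_ ht₀ ht₁).trans (measure_mono ?_)
    · exact lt_iSup_iff.mp (hf₁ ▸ hs)
    · exact lt_iSup_iff.mp (hg₁ ▸ hs)
    · exact smul_setOf_lt_add_smul_setOf_lt_subset ht₀ ht₁ hfgh
        (ENNReal.ofReal_pos.mpr hs₀).ne' ENNReal.ofReal_ne_top
  rw [lintegral_eq_setLIntegral_Ioo_meas_ofReal_lt volume hf fun x ↦ hf₁ ▸ le_iSup f x,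
    lintegral_eq_setLIntegral_Ioo_meas_ofReal_lt volume hg fun y ↦ hg₁ ▸ le_iSup g y,
    lintegral_eq_lintegral_meas_ofReal_lt volume hh,
    ← lintegral_const_mul' _ _ ENNReal.ofReal_ne_top,
    ← lintegral_const_mul' _ _ ENNReal.ofReal_ne_top]
  calc _ ≤ _ := le_lintegral_add _ _
    _ ≤ ∫⁻ s in Ioo 0 1, volume {z | ENNReal.ofReal s < h z} :=
        setLIntegral_mono' measurableSet_Ioo hlevel
    _ ≤ _ := lintegral_mono_set Ioo_subset_Ioi_self

theorem prekopaLeindler_of_iSup_ne_top {t : ℝ} (ht₀ : 0 < t) (ht₁ : t < 1)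
    {f g h : ℝ → ℝ≥0∞} (hf : Measurable f) (hg : Measurable g) (hh : Measurable h)
    (hf_top : ⨆ x, f x ≠ ⊤) (hg_top : ⨆ y, g y ≠ ⊤)
    (hfgh : ∀ x y, f x ^ (1 - t) * g y ^ t ≤ h ((1 - t) • x + t • y)) :
    (∫⁻ x, f x) ^ (1 - t) * (∫⁻ y, g y) ^ t ≤ ∫⁻ z, h z := by
  have h1t : 0 < 1 - t := by linarith
  set a := ⨆ x, f x
  set b := ⨆ y, g y
  rcases eq_or_ne a 0 with ha₀ | ha₀
  · simp [ENNReal.iSup_eq_zero.mp ha₀, ENNReal.zero_rpow_of_pos h1t]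
  rcases eq_or_ne b 0 with hb₀ | hb₀
  · simp [ENNReal.iSup_eq_zero.mp hb₀, ENNReal.zero_rpow_of_pos ht₀]
  -- Rescale `f` and `g` to have supremum `1`, and `h` accordingly.
  set c := a ^ (1 - t) * b ^ t
  have hc₀ : c ≠ 0 := mul_ne_zero (ENNReal.rpow_pos (pos_iff_ne_zero.2 ha₀) hf_top).ne'
    (ENNReal.rpow_pos (pos_iff_ne_zero.2 hb₀) hg_top).ne'
  have hc_top : c ≠ ⊤ := ENNReal.mul_ne_top (ENNReal.rpow_ne_top_of_nonneg h1t.le hf_top)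
    (ENNReal.rpow_ne_top_of_nonneg ht₀.le hg_top)
  have hscale : ∀ u v : ℝ≥0∞,
      (a⁻¹ * u) ^ (1 - t) * (b⁻¹ * v) ^ t = c⁻¹ * (u ^ (1 - t) * v ^ t) := fun u v ↦ by
    rw [ENNReal.mul_rpow_of_nonneg _ _ h1t.le, ENNReal.mul_rpow_of_nonneg _ _ ht₀.le,
      mul_mul_mul_comm, ENNReal.inv_rpow, ENNReal.inv_rpow,
      ENNReal.mul_inv (Or.inr (ENNReal.rpow_ne_top_of_nonneg ht₀.le hg_top))
        (Or.inl (ENNReal.rpow_ne_top_of_nonneg h1t.le hf_top))]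
  have hnorm := ofReal_mul_lintegral_add_le_of_iSup_eq_one ht₀ ht₁ (hf.const_mul a⁻¹)
    (hg.const_mul b⁻¹) (hh.const_mul c⁻¹)
    (by rw [← ENNReal.mul_iSup, ENNReal.inv_mul_cancel ha₀ hf_top])
    (by rw [← ENNReal.mul_iSup, ENNReal.inv_mul_cancel hb₀ hg_top])
    (fun x y ↦ (hscale _ _).trans_le (mul_le_mul_right (hfgh x y) _))
  have := (ENNReal.rpow_mul_rpow_le_add h1t ht₀ (by ring)).trans hnorm
  rw [lintegral_const_mul _ hf, lintegral_const_mul _ hg, lintegral_const_mul _ hh,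
    hscale] at this
  exact (ENNReal.mul_le_mul_iff_right (ENNReal.inv_ne_zero.mpr hc_top)
    (ENNReal.inv_ne_top.mpr hc₀)).mp this

theorem prekopaLeindler_volume : PrekopaLeindler (volume : Measure ℝ) := by
  intro t ht₀ ht₁ f g h hf hg hh hfgh
  have h1t : 0 < 1 - t := by linarith
  rw [← iSup_lintegral_min_natCast volume hf, ← iSup_lintegral_min_natCast volume hg]
  refine ENNReal.iSup_rpow_mul_iSup_rpow_le (monotone_lintegral_min_natCast volume f)
    (monotone_lintegral_min_natCast volume g) h1t ht₀ fun n ↦ ?_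
  have hbdd : ∀ u : ℝ → ℝ≥0∞, ⨆ x, min (u x) n ≠ ⊤ := fun u ↦
    ne_top_of_le_ne_top (ENNReal.natCast_ne_top n) (iSup_le fun _ ↦ min_le_right _ _)
  exact prekopaLeindler_of_iSup_ne_top ht₀ ht₁ (hf.min measurable_const)
    (hg.min measurable_const) hh (hbdd f) (hbdd g) fun x y ↦
      (mul_le_mul' (ENNReal.rpow_le_rpow (min_le_left _ _) h1t.le)
        (ENNReal.rpow_le_rpow (min_le_left _ _) ht₀.le)).trans (hfgh x y)

end Real

theorem prekopaLeindler_volume_pi : ∀ n : ℕ, PrekopaLeindler (volume : Measure (Fin n → ℝ))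
  | 0 => by
    rw [Measure.volume_pi_eq_dirac 0]
    exact .dirac_zero
  | n + 1 => by
    set e := (MeasurableEquiv.piFinSuccAbove (fun _ : Fin (n + 1) ↦ ℝ) 0).symm
    have he : ⇑(Fin.consLinearEquiv ℝ fun _ : Fin (n + 1) ↦ ℝ) = e := by
      ext p i
      simp [e]
    exact (Real.prekopaLeindler_volume.prod (prekopaLeindler_volume_pi n)).of_measurePreserving
      (Fin.consLinearEquiv ℝ fun _ ↦ ℝ).toLinearMap
      (he ▸ (volume_preserving_piFinSuccAbove (fun _ ↦ ℝ) 0).symm) (he ▸ e.measurableEmbedding)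

theorem EuclideanSpace.prekopaLeindler_volume (n : ℕ) :
    PrekopaLeindler (volume : Measure (EuclideanSpace ℝ (Fin n))) :=
  (prekopaLeindler_volume_pi n).of_measurePreserving
    (WithLp.linearEquiv 2 ℝ (Fin n → ℝ)).symm.toLinearMap (PiLp.volume_preserving_toLp _)
    (MeasurableEquiv.toLp 2 _).measurableEmbedding

theorem ConvexOn.indicator_exp_neg_rpow_mul_rpow_le {E : Type*} [AddCommGroup E] [Module ℝ E]
    {s : Set E} {ψ : E → ℝ} (hψ : ConvexOn ℝ s ψ) {t : ℝ} (ht₀ : 0 < t) (ht₁ : t < 1)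
    (x y : E) :
    s.indicator (fun z ↦ ENNReal.ofReal (Real.exp (-ψ z))) x ^ (1 - t) *
        s.indicator (fun z ↦ ENNReal.ofReal (Real.exp (-ψ z))) y ^ t ≤
      s.indicator (fun z ↦ ENNReal.ofReal (Real.exp (-ψ z))) ((1 - t) • x + t • y) := by
  have h1t : 0 < 1 - t := by linarith
  by_cases hx : x ∈ s
  swap
  · simp [hx, ENNReal.zero_rpow_of_pos h1t]
  by_cases hy : y ∈ s
  swap
  · simp [hy, ENNReal.zero_rpow_of_pos ht₀]
  rw [indicator_of_mem hx, indicator_of_mem hy,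
    indicator_of_mem (hψ.1 hx hy h1t.le ht₀.le (sub_add_cancel 1 t)),
    ENNReal.ofReal_rpow_of_pos (Real.exp_pos _), ENNReal.ofReal_rpow_of_pos (Real.exp_pos _),
    ← ENNReal.ofReal_mul (by positivity), ← Real.exp_mul, ← Real.exp_mul, ← Real.exp_add]
  have hconv := hψ.2 hx hy h1t.le ht₀.le (sub_add_cancel 1 t)
  simp only [smul_eq_mul] at hconv
  gcongr
  linarith

theorem ConvexOn.measurable_indicator_exp_neg {E : Type*} [NormedAddCommGroup E]
    [NormedSpace ℝ E] [FiniteDimensional ℝ E] [MeasurableSpace E] [BorelSpace E] {s : Set E}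
    {ψ : E → ℝ} (hs : IsOpen s) (hψ : ConvexOn ℝ s ψ) :
    Measurable (s.indicator fun z ↦ ENNReal.ofReal (Real.exp (-ψ z))) := by
  classical
  rw [← piecewise_eq_indicator]
  exact (ENNReal.continuous_ofReal.comp_continuousOn (Real.continuous_exp.comp_continuousOn
    (hψ.continuousOn hs).neg)).measurable_piecewise continuousOn_const hs.measurableSet

theorem convexOn_neg_log_of_rpow_mul_rpow_le {E : Type*} [AddCommGroup E] [Module ℝ E]
    {I : E → ℝ} (hI : ∀ x, 0 < I x)
    (hlc : ∀ x y (t : ℝ), 0 < t → t < 1 → I x ^ (1 - t) * I y ^ t ≤ I ((1 - t) • x + t • y)) :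
    ConvexOn ℝ univ fun x ↦ -Real.log (I x) := by
  refine ⟨convex_univ, fun x _ y _ a b ha hb hab ↦ ?_⟩
  obtain rfl | ha₀ := ha.eq_or_lt
  · obtain rfl : b = 1 := by linarith
    simp
  obtain rfl | hb₀ := hb.eq_or_lt
  · obtain rfl : a = 1 := by linarith
    simp
  obtain rfl : a = 1 - b := by linarith
  have hx := Real.rpow_pos_of_pos (hI x) (1 - b)
  have hy := Real.rpow_pos_of_pos (hI y) b
  have hxy := Real.log_le_log (mul_pos hx hy) (hlc x y b hb₀ (by linarith))
  rw [Real.log_mul hx.ne' hy.ne', Real.log_rpow (hI x), Real.log_rpow (hI y)] at hxy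
  simp only [smul_eq_mul]
  linarith

theorem prekopa_bounded_general (n : ℕ) (V : Set (EuclideanSpace ℝ (Fin n)))
    (hVopen : IsOpen V)
    (φ : ℝ × EuclideanSpace ℝ (Fin n) → ℝ)
    (hφ : ConvexOn ℝ ((Set.univ : Set ℝ) ×ˢ V) φ)
    (hint : ∀ t : ℝ, IntegrableOn (fun x : EuclideanSpace ℝ (Fin n) => Real.exp (-φ (t, x))) V) :
    ConvexOn ℝ Set.univ
      (fun t : ℝ => -Real.log (∫ x in V, Real.exp (-φ (t, x)))) := by
  rcases eq_or_ne (volume V) 0 with hV₀ | hV₀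
  -- Every integral vanishes, and `Real.log 0 = 0` makes the function constant.
  · simpa [Measure.restrict_eq_zero.mpr hV₀] using convexOn_const (0 : ℝ) convex_univ
  set G := (univ ×ˢ V).indicator fun p ↦ ENNReal.ofReal (Real.exp (-φ p))
  have hG : ∀ t, Measurable fun x ↦ G (t, x) := fun t ↦
    (hφ.measurable_indicator_exp_neg (isOpen_univ.prod hVopen)).comp measurable_prodMk_left
  have hGI : ∀ t, ∫⁻ x, G (t, x) = ENNReal.ofReal (∫ x in V, Real.exp (-φ (t, x))) := fun t ↦ by
    have hslice :
        (fun x ↦ G (t, x)) = V.indicator fun x ↦ ENNReal.ofReal (Real.exp (-φ (t, x))) := by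
      ext x
      by_cases hx : x ∈ V <;> simp [G, hx]
    rw [hslice, lintegral_indicator hVopen.measurableSet, ← ofReal_integral_eq_lintegral_ofReal
      (hint t) (ae_of_all _ fun x ↦ (Real.exp_pos _).le)]
  have hpos : ∀ t, 0 < ∫ x in V, Real.exp (-φ (t, x)) := fun t ↦
    (setIntegral_pos_iff_support_of_nonneg_ae (ae_of_all _ fun x ↦ (Real.exp_pos _).le)
      (hint t)).mpr <| by
        simpa [Function.support, (Real.exp_pos _).ne'] using pos_iff_ne_zero.mpr hV₀
  refine convexOn_neg_log_of_rpow_mul_rpow_le hpos fun t₀ t₁ b hb₀ hb₁ ↦ ?_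
  have := EuclideanSpace.prekopaLeindler_volume n hb₀ hb₁ (hG t₀) (hG t₁)
    (hG ((1 - b) • t₀ + b • t₁))
    fun x y ↦ hφ.indicator_exp_neg_rpow_mul_rpow_le hb₀ hb₁ (t₀, x) (t₁, y)
  rwa [hGI, hGI, hGI, ENNReal.ofReal_rpow_of_pos (hpos _), ENNReal.ofReal_rpow_of_pos (hpos _),
    ← ENNReal.ofReal_mul (by positivity), ENNReal.ofReal_le_ofReal_iff (hpos _).le] at this

/-- Prékopa's theorem on a bounded convex domain: if `V ⊆ ℝⁿ` is a bounded open convex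
domain, `φ` is convex on `ℝ × V`, and `∫_V e^{-φ(t,x)} dλ(x) < ∞` for each `t`, then
`Φ(t) := -log ∫_V e^{-φ(t,x)} dλ(x)` is convex on `ℝ`. -/
theorem prekopa_bounded (n : ℕ) (V : Set (EuclideanSpace ℝ (Fin n)))
    (hVopen : IsOpen V) (hVconv : Convex ℝ V) (hVbdd : Bornology.IsBounded V)
    (φ : ℝ × EuclideanSpace ℝ (Fin n) → ℝ)
    (hφ : ConvexOn ℝ ((Set.univ : Set ℝ) ×ˢ V) φ)
    (hint : ∀ t : ℝ, IntegrableOn (fun x : EuclideanSpace ℝ (Fin n) => Real.exp (-φ (t, x))) V) :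
    ConvexOn ℝ Set.univ
      (fun t : ℝ => -Real.log (∫ x in V, Real.exp (-φ (t, x)))) :=
  prekopa_bounded_general n V hVopen φ hφ hint
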